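/- arXiv:math/0304355 — 2 statements merged into one kernel-verified Lean document; each statement's English description precedes it below -/
import Mathlib

section
/- For every infinite path u ∈ Z, the sets D_α, where α ∈ Y ranges over the initial segments of u, form a neighborhood basis at u in the path space Y ∪ Z. -/
namespace GraphCstar

/-- A directed graph: vertices, edges, source and range maps. -/
structure Graph where
  V : Type
  Ed : Type
  src : Ed → V
  rng : Ed → V

variable (G : Graph)

/-- Validity of a list of edges as a path starting at vertex `v`. -/
def Valid : G.V → List G.Ed → Prop
  | _, [] => True
  | v, e :: l => G.src e = v ∧ Valid (G.rng e) l

/-- Terminal vertex of a list of edges starting at `v`. -/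
def rngTo : G.V → List G.Ed → G.V
  | v, [] => v
  | _, e :: l => rngTo (G.rng e) l

theorem valid_append (l₁ l₂ : List G.Ed) (v : G.V) :
    Valid G v (l₁ ++ l₂) ↔ Valid G v l₁ ∧ Valid G (rngTo G v l₁) l₂ := by
  induction l₁ generalizing v with
  | nil => simp [Valid, rngTo]
  | cons e l ih => simp [Valid, rngTo, ih, and_assoc]

theorem rngTo_append (l₁ l₂ : List G.Ed) (v : G.V) :
    rngTo G v (l₁ ++ l₂) = rngTo G (rngTo G v l₁) l₂ := by
  induction l₁ generalizing v with
  | nil => rfl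
  | cons e l ih => simp [rngTo, ih]

theorem valid_drop {v : G.V} {l : List G.Ed} (n : ℕ) (h : Valid G v l) :
    Valid G (rngTo G v (l.take n)) (l.drop n) := by
  have h' : Valid G v (l.take n ++ l.drop n) := by
    rw [List.take_append_drop]; exact h
  exact ((valid_append G _ _ _).mp h').2

/-- A finite path in the graph `G`; vertices are the paths of length `0`. -/
structure FinPath where
  start : G.V
  edges : List G.Ed
  valid : Valid G start edges

namespace FinPath

variable {G}

/-- The terminal vertex (range) of a finite path. -/
def rngF (α : FinPath G) : G.V := rngTo G α.start α.edges

/-- The length of a finite path. -/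
def len (α : FinPath G) : ℕ := α.edges.length

/-- The finite path of length `0` at the vertex `v`. -/
def vp (v : G.V) : FinPath G := ⟨v, [], trivial⟩

/-- The finite path consisting of the single edge `e`. -/
def ep (e : G.Ed) : FinPath G := ⟨G.src e, [e], ⟨rfl, trivial⟩⟩

/-- Concatenation of finite paths. -/
def concat (α β : FinPath G) (h : β.start = α.rngF) : FinPath G :=
  ⟨α.start, α.edges ++ β.edges,
    (valid_append G _ _ _).mpr
      ⟨α.valid, by
        show Valid G α.rngF β.edges
        rw [← h]; exact β.valid⟩⟩

theorem rngF_concat (α β : FinPath G) (h : β.start = α.rngF) :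
    (α.concat β h).rngF = β.rngF := by
  show rngTo G α.start (α.edges ++ β.edges) = _
  rw [rngTo_append]
  show rngTo G α.rngF β.edges = _
  rw [← h]; rfl

end FinPath

/-- `α` is an initial segment of `β`. -/
def IsPref (α β : FinPath G) : Prop := α.start = β.start ∧ α.edges <+: β.edges

/-- The "remainder" path: if `α` is an initial segment of `β`, the path `μ` with
`β = αμ` (for other inputs the value is junk). -/
def diff (α β : FinPath G) : FinPath G :=
  ⟨rngTo G β.start (β.edges.take α.edges.length),
    β.edges.drop α.edges.length, valid_drop G _ β.valid⟩

open Classical in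
/-- Totalized concatenation of finite paths (junk value when endpoints do not match). -/
noncomputable def catP (α β : FinPath G) : FinPath G :=
  if h : β.start = α.rngF then α.concat β h else α

open Classical in
/-- The product on `T = {(α,β) ∈ Y × Y : r(α) = r(β)} ∪ {z}`, with `z` encoded as `none`. -/
noncomputable def mulT :
    Option (FinPath G × FinPath G) → Option (FinPath G × FinPath G) →
      Option (FinPath G × FinPath G)
  | none, _ => none
  | _, none => none
  | some (α₁, β₁), some (α₂, β₂) =>
    if IsPref G β₁ α₂ then some (catP G α₁ (diff G β₁ α₂), β₂)
    else if IsPref G α₂ β₁ then some (α₁, catP G β₂ (diff G α₂ β₁))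
    else none

/-- The involution on `T`. -/
def starT :
    Option (FinPath G × FinPath G) → Option (FinPath G × FinPath G)
  | none => none
  | some (α, β) => some (β, α)

/-- The subset of `Option (FinPath G × FinPath G)` corresponding to
`T = {(α,β) : r(α) = r(β)} ∪ {z}`. -/
def TsetT : Set (Option (FinPath G × FinPath G)) :=
  {t | ∀ α β : FinPath G, t = some (α, β) → α.rngF = β.rngF}

/-- An infinite path in the graph `G`. -/
structure InfPath where
  seq : ℕ → G.Ed
  valid : ∀ i, G.src (seq (i + 1)) = G.rng (seq i)

/-- The initial vertex of an infinite path. -/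
def InfPath.start {G : Graph} (z : InfPath G) : G.V := G.src (z.seq 0)

/-- Prepending an edge to an infinite path. -/
def consInf (e : G.Ed) (z : InfPath G) (h : z.start = G.rng e) : InfPath G where
  seq := fun n =>
    match n with
    | 0 => e
    | m + 1 => z.seq m
  valid := fun i =>
    match i with
    | 0 => h
    | m + 1 => z.valid m

/-- Prepending a finite edge list to an infinite path (with the starting vertex recorded). -/
def appendInfAux :
    (l : List G.Ed) → (v : G.V) → Valid G v l → (z : InfPath G) →
      z.start = rngTo G v l → {w : InfPath G // w.start = v}
  | [], _, _, z, h => ⟨z, h⟩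
  | e :: l, v, hv, z, h =>
    let w := appendInfAux l (G.rng e) hv.2 z h
    ⟨consInf G e w.1 w.2, hv.1⟩

/-- Concatenation of a finite path with an infinite path. -/
def FinPath.concatInf {G : Graph} (α : FinPath G) (z : InfPath G)
    (h : z.start = α.rngF) : InfPath G :=
  (appendInfAux G α.edges α.start α.valid z h).1

/-- The path space `Y ∪ Z` of all finite and infinite paths. -/
def PathSp := FinPath G ⊕ InfPath G

/-- The initial vertex of a (finite or infinite) path. -/
def startOf : PathSp G → G.V
  | .inl α => α.start
  | .inr z => z.start

/-- The length of a path, in `ℕ∞`. -/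
def lenOf : PathSp G → ℕ∞
  | .inl α => (α.edges.length : ℕ∞)
  | .inr _ => ⊤

/-- The `i`-th edge (0-indexed) of a path, if it exists. -/
def nthEdge : PathSp G → ℕ → Option G.Ed
  | .inl α, i => α.edges[i]?
  | .inr z, i => some (z.seq i)

/-- `x = αγ` for some (finite or infinite, possibly length `0`) path `γ`;
that is, `α` is an initial segment of `x`, i.e. `x ∈ D_α`. -/
def Ext (α : FinPath G) (x : PathSp G) : Prop :=
  (∃ (β : FinPath G) (h : β.start = α.rngF), x = .inl (α.concat β h)) ∨
  (∃ (w : InfPath G) (h : w.start = α.rngF), x = .inr (α.concatInf w h))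

/-- The basic set `D_α ⊆ Y ∪ Z`. -/
def Dset (α : FinPath G) : Set (PathSp G) := {x | Ext G α x}

/-- The topology on the path space, generated by the sets `D_α` and their complements. -/
def pathTop : TopologicalSpace (PathSp G) :=
  .generateFrom (Set.range (Dset G) ∪ Set.range fun α => (Dset G α)ᶜ)

/-- The vertex `v` emits infinitely many edges. -/
def Vinf (v : G.V) : Prop := {e | G.src e = v}.Infinite

/-- Membership in `X = Y_∞ ∪ Z`. -/
def memX : PathSp G → Prop
  | .inl α => Vinf G α.rngF
  | .inr _ => True

/-- The set `X = Y_∞ ∪ Z`. -/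
def Xset : Set (PathSp G) := {x | memX G x}

/-- Tail equivalence of paths: `x = αγ` and `y = βγ` for finite paths `α, β`
and a common (finite or infinite) path `γ`. -/
def TailEq (x y : PathSp G) : Prop :=
  (∃ (α β γ : FinPath G) (h₁ : γ.start = α.rngF) (h₂ : γ.start = β.rngF),
      x = .inl (α.concat γ h₁) ∧ y = .inl (β.concat γ h₂)) ∨
  (∃ (α β : FinPath G) (w : InfPath G) (h₁ : w.start = α.rngF)
      (h₂ : w.start = β.rngF),
      x = .inr (α.concatInf w h₁) ∧ y = .inr (β.concatInf w h₂))

/-- A subset of the path space is invariant (a union of tail-equivalence classes). -/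
def InvariantS (F : Set (PathSp G)) : Prop :=
  ∀ x ∈ F, ∀ y, TailEq G x y → y ∈ F

/-- Membership `(x, k, y) ∈ G` for the path groupoid: `x = αγ`, `y = βγ` and
`k = l(α) - l(β)`. -/
def InG (x : PathSp G) (k : ℤ) (y : PathSp G) : Prop :=
  (∃ (α β γ : FinPath G) (h₁ : γ.start = α.rngF) (h₂ : γ.start = β.rngF),
      x = .inl (α.concat γ h₁) ∧ y = .inl (β.concat γ h₂) ∧
        k = (α.len : ℤ) - (β.len : ℤ)) ∨
  (∃ (α β : FinPath G) (w : InfPath G) (h₁ : w.start = α.rngF)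
      (h₂ : w.start = β.rngF),
      x = .inr (α.concatInf w h₁) ∧ y = .inr (β.concatInf w h₂) ∧
        k = (α.len : ℤ) - (β.len : ℤ))

/-- There is a finite path from `u` to `w`. -/
def Reach (u w : G.V) : Prop := ∃ β : FinPath G, β.start = u ∧ β.rngF = w

/-- A loop based at the vertex `v`. -/
def LoopAt (v : G.V) (α : FinPath G) : Prop :=
  α.edges ≠ [] ∧ α.start = v ∧ α.rngF = v ∧
    ∀ i e, i + 1 < α.edges.length → α.edges[i]? = some e → G.rng e ≠ v

/-- Condition (K): no vertex has exactly one loop based at it. -/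
def CondK : Prop := ¬ ∃ v : G.V, ∃! α : FinPath G, LoopAt G v α

/-- A point of the path space has trivial isotropy if whenever `x = αγ = βγ`
then `l(α) = l(β)`. -/
def TrivIso (x : PathSp G) : Prop :=
  ∀ α β : FinPath G,
    ((∃ (γ : FinPath G) (h₁ : γ.start = α.rngF) (h₂ : γ.start = β.rngF),
        x = .inl (α.concat γ h₁) ∧ x = .inl (β.concat γ h₂)) ∨
     (∃ (w : InfPath G) (h₁ : w.start = α.rngF) (h₂ : w.start = β.rngF),
        x = .inr (α.concatInf w h₁) ∧ x = .inr (β.concatInf w h₂))) →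
    α.len = β.len

end GraphCstar

/-!
The topology is generated by the sets `D_β` and their complements, so the neighbourhood filter of
`u` is the infimum of the principal filters of the generators containing `u`. The initial segments
of `u` are its truncations `u.take n`, whose sets `D` decrease with `n`; and a generator `D_βᶜ`
containing `u` contains `D_α` for the truncation `α` of `u` of length `|β|`, because distinct
finite paths of the same length have disjoint sets `D`.
-/

open Filter in
theorem TopologicalSpace.nhds_generateFrom_hasBasis {X ι : Type*} {g : Set (Set X)} {a : X}
    {p : ι → Prop} {B : ι → Set X} (hB : ∀ i, p i → a ∈ B i ∧ B i ∈ g)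
    (hdir : ∀ i, p i → ∀ j, p j → ∃ k, p k ∧ B k ⊆ B i ∧ B k ⊆ B j) (hne : ∃ i, p i)
    (hrefine : ∀ s ∈ g, a ∈ s → ∃ i, p i ∧ B i ⊆ s) :
    (@nhds X (TopologicalSpace.generateFrom g) a).HasBasis p B := by
  have heq : (⨅ s ∈ {s | a ∈ s ∧ s ∈ g}, 𝓟 s) = ⨅ i, ⨅ (_ : p i), 𝓟 (B i) := by
    refine le_antisymm (le_iInf₂ fun i hi => iInf₂_le (B i) (hB i hi)) ?_
    refine le_iInf₂ fun s ⟨has, hs⟩ => ?_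
    obtain ⟨i, hi, hBs⟩ := hrefine s hs has
    exact (iInf₂_le i hi).trans (principal_mono.2 hBs)
  rw [TopologicalSpace.nhds_generateFrom, heq]
  exact hasBasis_biInf_principal' hdir hne

namespace GraphCstar

section Paths

variable {G : Graph}

@[ext]
theorem FinPath.ext {α β : FinPath G} (hstart : α.start = β.start)
    (hedges : α.edges = β.edges) : α = β := by
  cases α; cases β; cases hstart; cases hedges; rfl

@[ext]
theorem InfPath.ext {w w' : InfPath G} (h : ∀ i, w.seq i = w'.seq i) : w = w' := by
  cases w; cases w'
  congr
  exact funext h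

theorem appendInfAux_seq (l : List G.Ed) (v : G.V) (hv : Valid G v l) (z : InfPath G)
    (h : z.start = rngTo G v l) (i : ℕ) :
    (appendInfAux G l v hv z h).1.seq i =
      if hi : i < l.length then l[i] else z.seq (i - l.length) := by
  induction l generalizing v i with
  | nil => simp [appendInfAux]
  | cons e l ih =>
    cases i with
    | zero => simp [appendInfAux, consInf]
    | succ i =>
      simp only [appendInfAux, consInf, List.length_cons, Nat.add_lt_add_iff_right,
        List.getElem_cons_succ, Nat.add_sub_add_right]
      exact ih _ _ _ i

theorem FinPath.concatInf_start (α : FinPath G) (z : InfPath G) (h : z.start = α.rngF) :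
    (α.concatInf z h).start = α.start :=
  (appendInfAux G α.edges α.start α.valid z h).2

theorem FinPath.concatInf_seq (α : FinPath G) (z : InfPath G) (h : z.start = α.rngF) (i : ℕ) :
    (α.concatInf z h).seq i =
      if hi : i < α.edges.length then α.edges[i] else z.seq (i - α.edges.length) :=
  appendInfAux_seq _ _ _ _ _ _

namespace InfPath

def tail (w : InfPath G) : InfPath G := ⟨fun i => w.seq (i + 1), fun i => w.valid (i + 1)⟩

def drop (w : InfPath G) (n : ℕ) : InfPath G :=
  ⟨fun i => w.seq (n + i), fun i => w.valid (n + i)⟩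

theorem valid_ofFn_seq (w : InfPath G) (n : ℕ) :
    Valid G w.start (List.ofFn fun i : Fin n => w.seq i) := by
  induction n generalizing w with
  | zero => trivial
  | succ n ih =>
    rw [List.ofFn_succ]
    refine ⟨rfl, ?_⟩
    show Valid G (G.rng (w.seq 0)) (List.ofFn fun i : Fin n => w.tail.seq i)
    rw [← w.valid 0]
    exact ih w.tail

def take (w : InfPath G) (n : ℕ) : FinPath G :=
  ⟨w.start, List.ofFn fun i : Fin n => w.seq i, w.valid_ofFn_seq n⟩

theorem take_len (w : InfPath G) (n : ℕ) : (w.take n).len = n := List.length_ofFn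

theorem rngF_take (w : InfPath G) (n : ℕ) : (w.take n).rngF = (w.drop n).start := by
  induction n generalizing w with
  | zero => rfl
  | succ n ih =>
    show rngTo G w.start (List.ofFn fun i : Fin (n + 1) => w.seq i) = _
    rw [List.ofFn_succ]
    show rngTo G (G.rng (w.seq 0)) (List.ofFn fun i : Fin n => w.tail.seq i) = _
    rw [← w.valid 0]
    exact (ih w.tail).trans (congrArg (fun k => G.src (w.seq k)) (by omega))

theorem take_concatInf_drop (w : InfPath G) (n : ℕ) :
    (w.take n).concatInf (w.drop n) (w.rngF_take n).symm = w := by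
  ext i
  rw [FinPath.concatInf_seq]
  split_ifs with hi
  · simp [take]
  · have hi' : n ≤ i := by simpa [take] using hi
    show w.seq (n + (i - (w.take n).edges.length)) = w.seq i
    simp only [take, List.length_ofFn]
    congr 1
    omega

theorem ext_take (w : InfPath G) (n : ℕ) : Ext G (w.take n) (.inr w) :=
  .inr ⟨w.drop n, (w.rngF_take n).symm, by rw [w.take_concatInf_drop]⟩

end InfPath

def Agrees (α : FinPath G) (x : PathSp G) : Prop :=
  α.start = startOf G x ∧ ∀ i (hi : i < α.edges.length), nthEdge G x i = some α.edges[i]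

theorem agrees_of_ext {α : FinPath G} {x : PathSp G} (h : Ext G α x) : Agrees α x := by
  rcases h with ⟨β, hβ, rfl⟩ | ⟨w, hw, rfl⟩
  · exact ⟨rfl, List.prefix_iff_getElem?.1 (List.prefix_append _ _)⟩
  · refine ⟨(α.concatInf_start w hw).symm, fun i hi => ?_⟩
    simp only [nthEdge, α.concatInf_seq, dif_pos hi]

theorem eq_of_agrees_of_len_eq {α β : FinPath G} {x : PathSp G} (hα : Agrees α x) (hβ : Agrees β x)
    (hlen : α.len = β.len) : α = β :=
  FinPath.ext (hα.1.trans hβ.1.symm) <| List.ext_getElem hlen fun i h₁ h₂ =>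
    Option.some.inj ((hα.2 i h₁).symm.trans (hβ.2 i h₂))

theorem InfPath.ext_iff_eq_take {α : FinPath G} {w : InfPath G} :
    Ext G α (.inr w) ↔ α = w.take α.len :=
  ⟨fun h => eq_of_agrees_of_len_eq (agrees_of_ext h) (agrees_of_ext (w.ext_take _)) (w.take_len _).symm,
    fun h => h ▸ w.ext_take _⟩

theorem ext_inl_of_agrees {α δ : FinPath G} (h : Agrees α (.inl δ)) : Ext G α (.inl δ) := by
  obtain ⟨hstart, hprefix⟩ : α.start = δ.start ∧ α.edges <+: δ.edges :=
    ⟨h.1, List.prefix_iff_getElem?.2 h.2⟩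
  obtain ⟨γ, hγ⟩ := hprefix
  have hvalid : Valid G α.rngF γ := by
    have := δ.valid
    rw [← hγ, valid_append, ← hstart] at this
    exact this.2
  exact .inl ⟨⟨α.rngF, γ, hvalid⟩, rfl, congrArg Sum.inl (FinPath.ext hstart.symm hγ.symm)⟩

theorem ext_iff_agrees {α : FinPath G} {x : PathSp G} : Ext G α x ↔ Agrees α x := by
  refine ⟨agrees_of_ext, fun h => ?_⟩
  cases x with
  | inl δ => exact ext_inl_of_agrees h
  | inr w =>
    exact InfPath.ext_iff_eq_take.2 (eq_of_agrees_of_len_eq h (agrees_of_ext (w.ext_take _))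
      (w.take_len _).symm)

theorem disjoint_dset_of_len_eq {α β : FinPath G} (hne : α ≠ β) (hlen : α.len = β.len) :
    Disjoint (Dset G α) (Dset G β) :=
  Set.disjoint_left.2 fun _ hα hβ => hne (eq_of_agrees_of_len_eq (agrees_of_ext hα) (agrees_of_ext hβ) hlen)

theorem InfPath.dset_take_antitone (w : InfPath G) : Antitone fun n => Dset G (w.take n) := by
  intro n m hnm x hx
  obtain ⟨hstart, hedges⟩ := ext_iff_agrees.1 hx
  refine ext_iff_agrees.2 ⟨hstart, fun i hi => ?_⟩
  have him : i < m := by simp only [take, List.length_ofFn] at hi; omega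
  rw [hedges i (by simpa [take] using him)]
  simp [take]

end Paths

theorem nhds_basis_at_infinite_path_general (G : Graph) (u : InfPath G) :
    (@nhds (PathSp G) (pathTop G) (Sum.inr u)).HasBasis
      (fun α : FinPath G => Ext G α (Sum.inr u)) (fun α => Dset G α) := by
  refine TopologicalSpace.nhds_generateFrom_hasBasis (fun α hα => ⟨hα, Or.inl ⟨α, rfl⟩⟩) ?_
    ⟨u.take 0, u.ext_take 0⟩ ?_
  · intro α hα β hβ
    rw [InfPath.ext_iff_eq_take] at hα hβ
    refine ⟨u.take (max α.len β.len), u.ext_take _, ?_, ?_⟩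
    · exact (u.dset_take_antitone (le_max_left _ _)).trans_eq (congrArg (Dset G) hα.symm)
    · exact (u.dset_take_antitone (le_max_right _ _)).trans_eq (congrArg (Dset G) hβ.symm)
  · rintro s (⟨β, rfl⟩ | ⟨β, rfl⟩) hu
    · exact ⟨β, hu, subset_rfl⟩
    · refine ⟨u.take β.len, u.ext_take _, Set.subset_compl_iff_disjoint_right.2 ?_⟩
      exact disjoint_dset_of_len_eq (fun h => hu (h ▸ u.ext_take _)) (u.take_len _)

/-- For every infinite path `u ∈ Z`, the sets `D_α`, where `α ∈ Y`
ranges over the initial segments of `u`, form a neighborhood basis at `u` in the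
path space `Y ∪ Z`. -/
theorem nhds_basis_at_infinite_path (G : Graph) [Countable G.V] [Countable G.Ed]
    (hns : ∀ v : G.V, ∃ e : G.Ed, G.src e = v) (u : InfPath G) :
    (@nhds (PathSp G) (pathTop G) (Sum.inr u)).HasBasis
      (fun α : FinPath G => Ext G α (Sum.inr u)) (fun α => Dset G α) :=
  nhds_basis_at_infinite_path_general G u

end GraphCstar
end

section
/- Let ({P_v}, {S_e}) be a representation of E on a Hilbert space 𝓗, and for α = e_1⋯e_k ∈ Y set S_α = S_{e_1}⋯S_{e_k} (with S_v = P_v for a vertex v). Define Π : T → B(𝓗) by Π(z) = 0 and Π(α,β) = S_α S_β*. Then Π is a *-homomorphism: Π(st) = Π(s)Π(t) and Π(s*) = Π(s)* for all s, t ∈ T. -/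
namespace GraphCstar

variable (G : Graph)

variable (𝓗 : Type) [NormedAddCommGroup 𝓗] [InnerProductSpace ℂ 𝓗] [CompleteSpace 𝓗]

/-- A representation of the directed graph `G` on the Hilbert space `𝓗`: mutually
orthogonal projections `P v` and operators `S e` such that the projections
`S e (S e)*` are mutually orthogonal and the Cuntz-Krieger relations (i)-(iii) hold. -/
structure GraphRep where
  P : G.V → 𝓗 →L[ℂ] 𝓗
  S : G.Ed → 𝓗 →L[ℂ] 𝓗
  P_sa : ∀ v, ContinuousLinearMap.adjoint (P v) = P v
  P_idem : ∀ v, P v * P v = P v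
  P_orth : ∀ v w, v ≠ w → P v * P w = 0
  SS_orth : ∀ e f, e ≠ f →
    (S e * ContinuousLinearMap.adjoint (S e)) * (S f * ContinuousLinearMap.adjoint (S f)) = 0
  adjS_S : ∀ e, ContinuousLinearMap.adjoint (S e) * S e = P (G.rng e)
  P_sum : ∀ (v : G.V) (h : {e : G.Ed | G.src e = v}.Finite),
    P v = ∑ e ∈ h.toFinset, S e * ContinuousLinearMap.adjoint (S e)
  P_src : ∀ e, P (G.src e) * (S e * ContinuousLinearMap.adjoint (S e)) =
    S e * ContinuousLinearMap.adjoint (S e)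

variable {G 𝓗}

/-- `S_α = S_{e_1} ⋯ S_{e_k}` for a finite path `α = e_1 ⋯ e_k`, with `S_v = P_v`
for a vertex `v` (path of length `0`). -/
def SPath (ρ : GraphRep G 𝓗) (α : FinPath G) : 𝓗 →L[ℂ] 𝓗 :=
  match α.edges with
  | [] => ρ.P α.start
  | l@(_ :: _) => (l.map ρ.S).prod

/-- The map `Π : T → B(𝓗)`, `Π(z) = 0`, `Π(α,β) = S_α S_β*`. -/
noncomputable def PiT (ρ : GraphRep G 𝓗) : Option (FinPath G × FinPath G) → 𝓗 →L[ℂ] 𝓗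
  | none => 0
  | some (α, β) => SPath ρ α * ContinuousLinearMap.adjoint (SPath ρ β)

/-!
For paths `α, β` starting at the same vertex, `S_α* S_β` is `S_μ` if `β = αμ`, `S_μ*` if
`α = βμ`, and `0` otherwise. This is peeled off edge by edge from `S_e* S_e = P_{r(e)}` and
`S_e* S_f = 0` for `e ≠ f` (the ranges of `S_e` and `S_f` are orthogonal), together with
`P_{s(e)} S_e = S_e = S_e P_{r(e)}`; the second identity holds because `S_e` is a partial
isometry with initial projection `P_{r(e)}`. Multiplicativity of `Π` on `T` is then read off
case by case, the case where `α₂` is an initial segment of `β₁` being the adjoint of the case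
where `β₁` is an initial segment of `α₂`.
-/

theorem mul_eq_self_of_star_mul_self_eq {E : Type*} [NonUnitalNormedRing E] [StarRing E]
    [CStarRing E] {x p : E} (hp : IsIdempotentElem p) (hx : star x * x = p) : x * p = x := by
  have hp_star : star p = p := by rw [← hx, star_mul, star_star]
  have hx' : ∀ y, star x * (x * y) = p * y := fun y => by rw [← mul_assoc, hx]
  have h : star (x * p - x) * (x * p - x) = 0 := by
    simp only [star_sub, star_mul, hp_star, sub_mul, mul_sub, mul_assoc, hx, hx', hp.eq]
    abel
  exact sub_eq_zero.mp ((CStarRing.star_mul_self_eq_zero_iff _).mp h)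

namespace GraphRep

variable (ρ : GraphRep G 𝓗)

theorem star_P (v : G.V) : star (ρ.P v) = ρ.P v := by
  rw [ContinuousLinearMap.star_eq_adjoint, ρ.P_sa]

theorem star_S_mul_S (e : G.Ed) : star (ρ.S e) * ρ.S e = ρ.P (G.rng e) := by
  rw [ContinuousLinearMap.star_eq_adjoint, ρ.adjS_S]

theorem S_mul_P_rng (e : G.Ed) : ρ.S e * ρ.P (G.rng e) = ρ.S e :=
  mul_eq_self_of_star_mul_self_eq (ρ.P_idem _) (ρ.star_S_mul_S e)

theorem S_mul_star_S_mul_S (e : G.Ed) : ρ.S e * (star (ρ.S e) * ρ.S e) = ρ.S e := by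
  rw [star_S_mul_S, S_mul_P_rng]

theorem P_src_mul_S (e : G.Ed) : ρ.P (G.src e) * ρ.S e = ρ.S e := by
  calc ρ.P (G.src e) * ρ.S e
      = ρ.P (G.src e) * ρ.S e * (star (ρ.S e) * ρ.S e) := by rw [mul_assoc, S_mul_star_S_mul_S]
    _ = ρ.P (G.src e) * (ρ.S e * star (ρ.S e)) * ρ.S e := by simp only [mul_assoc]
    _ = ρ.S e := by
      rw [ContinuousLinearMap.star_eq_adjoint, ρ.P_src, ← ContinuousLinearMap.star_eq_adjoint,
        mul_assoc, S_mul_star_S_mul_S]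

theorem star_S_mul_S_of_ne {e f : G.Ed} (h : e ≠ f) : star (ρ.S e) * ρ.S f = 0 := by
  have hef : ρ.S e * star (ρ.S e) * (ρ.S f * star (ρ.S f)) = 0 := by
    simpa only [ContinuousLinearMap.star_eq_adjoint] using ρ.SS_orth e f h
  calc star (ρ.S e) * ρ.S f
      = star (ρ.S e * (star (ρ.S e) * ρ.S e)) * (ρ.S f * (star (ρ.S f) * ρ.S f)) := by
        rw [S_mul_star_S_mul_S, S_mul_star_S_mul_S]
    _ = star (ρ.S e) * (ρ.S e * star (ρ.S e) * (ρ.S f * star (ρ.S f)) * ρ.S f) := by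
        simp only [star_mul, star_star, mul_assoc]
    _ = 0 := by rw [hef, zero_mul, mul_zero]

/-- `S_l` for the edge list `l` read as a path from `v`; the factor `P v` makes the empty
list give `S_v = P_v`. -/
def pathOp (v : G.V) (l : List G.Ed) : 𝓗 →L[ℂ] 𝓗 := ρ.P v * (l.map ρ.S).prod

theorem pathOp_nil (v : G.V) : ρ.pathOp v [] = ρ.P v := by
  simp [pathOp]

theorem pathOp_cons {v : G.V} {e : G.Ed} (l : List G.Ed) (h : G.src e = v) :
    ρ.pathOp v (e :: l) = ρ.S e * ρ.pathOp (G.rng e) l := by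
  rw [pathOp, pathOp, List.map_cons, List.prod_cons, ← mul_assoc, ← h, P_src_mul_S,
    ← mul_assoc, S_mul_P_rng]

theorem P_mul_pathOp (v : G.V) (l : List G.Ed) : ρ.P v * ρ.pathOp v l = ρ.pathOp v l := by
  rw [pathOp, ← mul_assoc, ρ.P_idem]

theorem P_mul_pathOp_of_ne {u v : G.V} (h : u ≠ v) (l : List G.Ed) :
    ρ.P u * ρ.pathOp v l = 0 := by
  rw [pathOp, ← mul_assoc, ρ.P_orth u v h, zero_mul]

theorem pathOp_append {v : G.V} {l₁ l₂ : List G.Ed} (h : Valid G v (l₁ ++ l₂)) :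
    ρ.pathOp v (l₁ ++ l₂) = ρ.pathOp v l₁ * ρ.pathOp (rngTo G v l₁) l₂ := by
  induction l₁ generalizing v with
  | nil => exact (ρ.P_mul_pathOp v l₂).symm
  | cons e t ih =>
    obtain ⟨he, ht⟩ := h
    rw [List.cons_append, pathOp_cons _ _ he, pathOp_cons _ _ he, ih ht, mul_assoc]
    rfl

theorem star_pathOp_mul_pathOp {v : G.V} {l : List G.Ed} (h : Valid G v l) :
    star (ρ.pathOp v l) * ρ.pathOp v l = ρ.P (rngTo G v l) := by
  induction l generalizing v with
  | nil => rw [pathOp_nil, star_P, ρ.P_idem]; rfl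
  | cons e t ih =>
    obtain ⟨he, ht⟩ := h
    calc star (ρ.pathOp v (e :: t)) * ρ.pathOp v (e :: t)
        = star (ρ.pathOp (G.rng e) t) * ((star (ρ.S e) * ρ.S e) * ρ.pathOp (G.rng e) t) := by
          simp only [pathOp_cons _ _ he, star_mul, mul_assoc]
      _ = ρ.P (rngTo G v (e :: t)) := by rw [star_S_mul_S, P_mul_pathOp, ih ht]; rfl

theorem star_pathOp_mul_pathOp_eq_zero {v w : G.V} {l₁ l₂ : List G.Ed}
    (h₁ : Valid G v l₁) (h₂ : Valid G w l₂)
    (hpre₁ : ¬(v = w ∧ l₁ <+: l₂)) (hpre₂ : ¬(w = v ∧ l₂ <+: l₁)) :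
    star (ρ.pathOp v l₁) * ρ.pathOp w l₂ = 0 := by
  induction l₁ generalizing v w l₂ with
  | nil =>
    have hvw : v ≠ w := fun h => hpre₁ ⟨h, List.nil_prefix⟩
    rw [pathOp_nil, star_P, P_mul_pathOp_of_ne _ hvw]
  | cons e t ih =>
    obtain ⟨he, ht⟩ := h₁
    cases l₂ with
    | nil =>
      have hwv : w ≠ v := fun h => hpre₂ ⟨h, List.nil_prefix⟩
      rw [pathOp_nil, ← star_P, ← star_mul, P_mul_pathOp_of_ne _ hwv, star_zero]
    | cons f t₂ =>
      obtain ⟨hf, ht₂⟩ := h₂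
      rw [pathOp_cons _ _ he, pathOp_cons _ _ hf, star_mul, mul_assoc,
        ← mul_assoc (star (ρ.S e))]
      by_cases hef : e = f
      · subst hef
        have hvw : v = w := he.symm.trans hf
        subst hvw
        rw [star_S_mul_S, P_mul_pathOp,
          ih ht ht₂ (fun h => hpre₁ ⟨rfl, List.cons_prefix_cons.mpr ⟨rfl, h.2⟩⟩)
            (fun h => hpre₂ ⟨rfl, List.cons_prefix_cons.mpr ⟨rfl, h.2⟩⟩)]
      · rw [star_S_mul_S_of_ne _ hef, zero_mul, mul_zero]

end GraphRep

namespace FinPath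

theorem ext_s12 {α β : FinPath G} (hstart : α.start = β.start) (hedges : α.edges = β.edges) :
    α = β := by
  cases α; cases β; cases hstart; cases hedges; rfl

variable (ρ : GraphRep G 𝓗)

theorem SPath_eq_pathOp (α : FinPath G) : SPath ρ α = ρ.pathOp α.start α.edges := by
  obtain ⟨v, _ | ⟨e, t⟩, hv⟩ := α
  · rw [ρ.pathOp_nil]; rfl
  · show (List.map ρ.S (e :: t)).prod = _
    rw [ρ.pathOp_cons t hv.1, GraphRep.pathOp, List.map_cons, List.prod_cons, ← mul_assoc,
      ρ.S_mul_P_rng]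

theorem P_start_mul_SPath (α : FinPath G) : ρ.P α.start * SPath ρ α = SPath ρ α := by
  rw [SPath_eq_pathOp, ρ.P_mul_pathOp]

theorem SPath_concat (α β : FinPath G) (h : β.start = α.rngF) :
    SPath ρ (α.concat β h) = SPath ρ α * SPath ρ β := by
  simp only [SPath_eq_pathOp]
  show ρ.pathOp α.start (α.edges ++ β.edges) = _
  rw [ρ.pathOp_append (v := α.start) (l₁ := α.edges) (l₂ := β.edges) (α.concat β h).valid, h]
  rfl

theorem star_SPath_mul_SPath (α : FinPath G) :
    star (SPath ρ α) * SPath ρ α = ρ.P α.rngF := by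
  rw [SPath_eq_pathOp]
  exact ρ.star_pathOp_mul_pathOp α.valid

end FinPath

section Prefix

variable {α β : FinPath G}

theorem diff_start_of_isPref (h : IsPref G β α) : (diff G β α).start = β.rngF := by
  show rngTo G α.start (α.edges.take β.edges.length) = rngTo G β.start β.edges
  rw [← List.prefix_iff_eq_take.mp h.2, h.1]

theorem concat_diff_of_isPref (h : IsPref G β α) :
    β.concat (diff G β α) (diff_start_of_isPref h) = α := by
  obtain ⟨t, ht⟩ := h.2
  refine FinPath.ext_s12 h.1 ?_
  show β.edges ++ α.edges.drop β.edges.length = α.edges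
  rw [← ht, List.drop_left]

theorem star_SPath_mul_SPath_of_isPref (ρ : GraphRep G 𝓗) (h : IsPref G β α) :
    star (SPath ρ β) * SPath ρ α = SPath ρ (diff G β α) := by
  conv_lhs => rw [← concat_diff_of_isPref h, FinPath.SPath_concat, ← mul_assoc,
    FinPath.star_SPath_mul_SPath, ← diff_start_of_isPref h, FinPath.P_start_mul_SPath]

theorem star_SPath_mul_SPath_of_not_isPref (ρ : GraphRep G 𝓗) (h₁ : ¬IsPref G β α)
    (h₂ : ¬IsPref G α β) : star (SPath ρ β) * SPath ρ α = 0 := by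
  rw [FinPath.SPath_eq_pathOp, FinPath.SPath_eq_pathOp]
  exact ρ.star_pathOp_mul_pathOp_eq_zero β.valid α.valid h₁ h₂

end Prefix

section PiT

variable (ρ : GraphRep G 𝓗)

theorem PiT_some (α β : FinPath G) :
    PiT ρ (some (α, β)) = SPath ρ α * star (SPath ρ β) := by
  rw [PiT, ContinuousLinearMap.star_eq_adjoint]

theorem PiT_starT (s : Option (FinPath G × FinPath G)) :
    PiT ρ (starT G s) = star (PiT ρ s) := by
  rcases s with _ | ⟨α, β⟩
  · exact star_zero _ |>.symm
  · rw [starT, PiT_some, PiT_some, star_mul, star_star]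

theorem PiT_mul_of_isPref {α₁ β₁ α₂ : FinPath G} (β₂ : FinPath G) (h₁ : α₁.rngF = β₁.rngF)
    (h : IsPref G β₁ α₂) :
    PiT ρ (some (catP G α₁ (diff G β₁ α₂), β₂)) =
      PiT ρ (some (α₁, β₁)) * PiT ρ (some (α₂, β₂)) := by
  have hstart : (diff G β₁ α₂).start = α₁.rngF := (diff_start_of_isPref h).trans h₁.symm
  rw [catP, dif_pos hstart, PiT_some, PiT_some, PiT_some, FinPath.SPath_concat,
    ← star_SPath_mul_SPath_of_isPref ρ h]
  simp only [mul_assoc]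

theorem PiT_mul_of_isPref_symm {α₁ β₁ β₂ : FinPath G} (α₂ : FinPath G) (h₂ : α₂.rngF = β₂.rngF)
    (h : IsPref G α₂ β₁) :
    PiT ρ (some (α₁, catP G β₂ (diff G α₂ β₁))) =
      PiT ρ (some (α₁, β₁)) * PiT ρ (some (α₂, β₂)) := by
  have := congrArg star (PiT_mul_of_isPref ρ α₁ h₂.symm h)
  rwa [← PiT_starT, star_mul, ← PiT_starT, ← PiT_starT] at this

theorem PiT_mul_of_not_isPref {α₁ β₁ α₂ β₂ : FinPath G} (h₁ : ¬IsPref G β₁ α₂)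
    (h₂ : ¬IsPref G α₂ β₁) : PiT ρ (some (α₁, β₁)) * PiT ρ (some (α₂, β₂)) = 0 := by
  rw [PiT_some, PiT_some, mul_assoc, ← mul_assoc (star _),
    star_SPath_mul_SPath_of_not_isPref ρ h₁ h₂, zero_mul, mul_zero]

end PiT

theorem PiT_star_hom_general (G : Graph)
    (𝓗 : Type) [NormedAddCommGroup 𝓗] [InnerProductSpace ℂ 𝓗] [CompleteSpace 𝓗]
    (ρ : GraphRep G 𝓗) :
    (∀ s ∈ TsetT G, ∀ t ∈ TsetT G, PiT ρ (mulT G s t) = PiT ρ s * PiT ρ t) ∧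
    (∀ s ∈ TsetT G, PiT ρ (starT G s) = ContinuousLinearMap.adjoint (PiT ρ s)) := by
  refine ⟨?_, fun s _ => by rw [PiT_starT, ContinuousLinearMap.star_eq_adjoint]⟩
  rintro (_ | ⟨α₁, β₁⟩) hs (_ | ⟨α₂, β₂⟩) ht
  · exact (zero_mul _).symm
  · exact (zero_mul _).symm
  · exact (mul_zero _).symm
  simp only [mulT]
  split_ifs with h₁ h₂
  · exact PiT_mul_of_isPref ρ β₂ (hs α₁ β₁ rfl) h₁
  · exact PiT_mul_of_isPref_symm ρ α₂ (ht α₂ β₂ rfl) h₂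
  · exact (PiT_mul_of_not_isPref ρ h₁ h₂).symm

/-- The map `Π : T → B(𝓗)` given by `Π(z) = 0` and
`Π(α,β) = S_α S_β*` is a `*`-homomorphism: `Π(st) = Π(s)Π(t)` and `Π(s*) = Π(s)*`
for all `s, t ∈ T`. -/
theorem PiT_star_hom (G : Graph) [Countable G.V] [Countable G.Ed]
    (𝓗 : Type) [NormedAddCommGroup 𝓗] [InnerProductSpace ℂ 𝓗] [CompleteSpace 𝓗]
    (ρ : GraphRep G 𝓗) :
    (∀ s ∈ TsetT G, ∀ t ∈ TsetT G, PiT ρ (mulT G s t) = PiT ρ s * PiT ρ t) ∧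
    (∀ s ∈ TsetT G, PiT ρ (starT G s) = ContinuousLinearMap.adjoint (PiT ρ s)) :=
  PiT_star_hom_general G 𝓗 ρ

end GraphCstar
end
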